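/- For every supply vector c ∈ Z_{≥0}^{|R|} and every integer utility vector u ∈ Z^n with finite minimum fractional committee size τ_c(u), the value τ_c(u) lies in (1/L_n)·Z, where L_n is the least common multiple of the absolute determinants of all invertible 0/1 square matrices of order at most n. Consequently, if 0 < δ < 1/L_n and τ_c(u) ≤ k' + δ for some integer k', then τ_c(u) ≤ k'. -/

import Mathlib

/-!
Let `z` be an optimal solution, `F` the set of types whose coordinate lies strictly between its
bounds `0` and `c R`, and call a voter tight if its utility constraint holds with equality.
Optimality forces the all-ones vector on `F` into the span of the tight rows of the voter
incidence matrix restricted to `F`: otherwise some direction orthogonal to these rows has negative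
total, and moving `z` a little along it keeps it feasible while decreasing the objective.
Choosing linearly independent tight rows and a nonsingular square 0/1 submatrix `B` of them, of
order at most `n`, Cramer's rule makes `det B` times the coefficients of the all-ones vector
integral. Since every coordinate outside `F` and every tight utility is an integer, this gives
`det B * τ ∈ ℤ`, and `|det B|` divides `L`.

Integrality of a real number is expressed as membership in `(⊥ : Subring ℝ)`, the image of `ℤ`.
-/

/-- Candidate types: non-empty subsets of the voter set `Fin n`. -/
abbrev Typ (n : ℕ) := {S : Finset (Fin n) // S.Nonempty}

/-- Utility of voter `i` under an integral committee `x`. -/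
def intUtil {n : ℕ} (x : Typ n → ℕ) (i : Fin n) : ℤ :=
  ∑ R : Typ n, if i ∈ R.1 then (x R : ℤ) else 0

/-- Utility of voter `i` under a fractional committee `x`. -/
def fracUtil {n : ℕ} (x : Typ n → ℝ) (i : Fin n) : ℝ :=
  ∑ R : Typ n, if i ∈ R.1 then x R else 0

/-- `x` is an integral committee for the instance `(c, k)`. -/
def IsIntCommittee {n : ℕ} (c : Typ n → ℕ) (k : ℕ) (x : Typ n → ℕ) : Prop :=
  (∀ R, x R ≤ c R) ∧ (∑ R : Typ n, x R) ≤ k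

/-- `x` is a fractional committee for the instance `(c, k)`. -/
def IsFracCommittee {n : ℕ} (c : Typ n → ℕ) (k : ℕ) (x : Typ n → ℝ) : Prop :=
  (∀ R, 0 ≤ x R) ∧ (∀ R, x R ≤ (c R : ℝ)) ∧ (∑ R : Typ n, x R) ≤ (k : ℝ)

/-- `u` is integral-committee-feasible in `(c, k)`. -/
def IntFeasible {n : ℕ} (c : Typ n → ℕ) (k : ℕ) (u : Fin n → ℤ) : Prop :=
  ∃ x : Typ n → ℕ, IsIntCommittee c k x ∧ ∀ i, u i ≤ intUtil x i

/-- `u` is fractional-committee-feasible in `(c, k)`. -/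
def FracFeasible {n : ℕ} (c : Typ n → ℕ) (k : ℕ) (u : Fin n → ℤ) : Prop :=
  ∃ x : Typ n → ℝ, IsFracCommittee c k x ∧ ∀ i, (u i : ℝ) ≤ fracUtil x i

/-- `(c, k)` is integralizable. -/
def Integralizable {n : ℕ} (c : Typ n → ℕ) (k : ℕ) : Prop :=
  ∀ u : Fin n → ℤ, FracFeasible c k u → IntFeasible c k u

/-- The set of absolute determinants of invertible 0/1 square matrices of order
at most `n`. -/
def DetVals (n : ℕ) : Set ℕ :=
  {d | ∃ m : ℕ, m ≤ n ∧ ∃ B : Matrix (Fin m) (Fin m) ℤ,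
        (∀ i j, B i j = 0 ∨ B i j = 1) ∧ B.det ≠ 0 ∧ d = B.det.natAbs}

/-- `L` is the least common multiple of the set `s` of naturals. -/
def IsLcmOf (s : Set ℕ) (L : ℕ) : Prop :=
  (∀ d ∈ s, d ∣ L) ∧ ∀ L' : ℕ, (∀ d ∈ s, d ∣ L') → L ∣ L'

open Matrix Filter Topology Submodule Set

theorem exists_dotProduct_eq_zero_and_neg_of_notMem_span {ι W K : Type*} [Field K] [LinearOrder K]
    [IsStrictOrderedRing K] [Fintype W] [DecidableEq W] {r : ι → W → K} {x : W → K}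
    (hx : x ∉ span K (range r)) : ∃ d : W → K, (∀ i, r i ⬝ᵥ d = 0) ∧ x ⬝ᵥ d < 0 := by
  obtain ⟨f, hfx, hf⟩ := exists_dual_map_eq_bot_of_notMem hx inferInstance
  set e : W → K := fun w => f fun j => if w = j then 1 else 0
  have hfe : ∀ y, f y = y ⬝ᵥ e := fun y => by
    simp only [LinearMap.pi_apply_eq_sum_univ f y, dotProduct, smul_eq_mul, e]
  refine ⟨-f x • e, fun i => ?_, ?_⟩
  · have hri : f (r i) ∈ (span K (range r)).map f :=
      mem_map_of_mem (subset_span (mem_range_self i))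
    rw [hf, Submodule.mem_bot] at hri
    rw [dotProduct_smul, ← hfe, hri, smul_zero]
  · rw [dotProduct_smul, ← hfe, smul_eq_mul, neg_mul, neg_neg_iff_pos]
    exact mul_self_pos.2 hfx

theorem eventually_add_mul_mem {a : ℝ} {s : Set ℝ} (hs : s ∈ 𝓝 a) (b : ℝ) :
    ∀ᶠ ε in 𝓝 (0 : ℝ), a + ε * b ∈ s := by
  have := ((tendsto_id (x := 𝓝 (0 : ℝ))).mul_const b).const_add a
  rw [zero_mul, add_zero] at this
  exact this hs

section LinearProgram

variable {ι V : Type*} [Fintype ι] [Fintype V] (A : Matrix ι V ℝ) {c : V → ℝ} {u : ι → ℝ}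
  {z : V → ℝ}

theorem eventually_feasible_add_smul (hz0 : 0 ≤ z) (hzc : z ≤ c) (hzu : u ≤ A *ᵥ z) {d : V → ℝ}
    (hd_free : ∀ R, ¬(0 < z R ∧ z R < c R) → d R = 0)
    (hd_tight : ∀ i, (A *ᵥ z) i = u i → (A *ᵥ d) i = 0) :
    ∀ᶠ ε in 𝓝 (0 : ℝ), 0 ≤ z + ε • d ∧ z + ε • d ≤ c ∧ u ≤ A *ᵥ (z + ε • d) := by
  have hbox : ∀ R, ∀ᶠ ε in 𝓝 (0 : ℝ), 0 ≤ z R + ε * d R ∧ z R + ε * d R ≤ c R := by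
    intro R
    by_cases hR : 0 < z R ∧ z R < c R
    · filter_upwards [eventually_add_mul_mem (Ioo_mem_nhds hR.1 hR.2) (d R)] with ε hε
      exact ⟨hε.1.le, hε.2.le⟩
    · simp [hd_free R hR, hzc R, show 0 ≤ z R from hz0 R]
  have hrow : ∀ i, ∀ᶠ ε in 𝓝 (0 : ℝ), u i ≤ (A *ᵥ z) i + ε * (A *ᵥ d) i := by
    intro i
    rcases (hzu i).eq_or_lt with h | h
    · simp [hd_tight i h.symm, h]
    · filter_upwards [eventually_add_mul_mem (Ioi_mem_nhds h) ((A *ᵥ d) i)] with ε hε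
      exact hε.le
  filter_upwards [eventually_all.2 hbox, eventually_all.2 hrow] with ε hε_box hε_row
  rw [mulVec_add, mulVec_smul]
  exact ⟨fun R => (hε_box R).1, fun R => (hε_box R).2, hε_row⟩

theorem one_mem_span_tight_rows_of_optimal (hz0 : 0 ≤ z) (hzc : z ≤ c) (hzu : u ≤ A *ᵥ z)
    (hmin : ∀ z', 0 ≤ z' → z' ≤ c → u ≤ A *ᵥ z' → ∑ R, z R ≤ ∑ R, z' R) :
    (fun _ : {R // 0 < z R ∧ z R < c R} => (1 : ℝ)) ∈
      span ℝ (range fun i : {i // (A *ᵥ z) i = u i} =>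
        fun R : {R // 0 < z R ∧ z R < c R} => A i R) := by
  classical
  by_contra hspan
  obtain ⟨d, hd_tight, hd_one⟩ := exists_dotProduct_eq_zero_and_neg_of_notMem_span hspan
  set D : V → ℝ := fun R => if h : 0 < z R ∧ z R < c R then d ⟨R, h⟩ else 0
  have hD_free : ∀ R, ¬(0 < z R ∧ z R < c R) → D R = 0 := fun R hR => dif_neg hR
  have hD_dot : ∀ w : V → ℝ, w ⬝ᵥ D = (fun R : {R // 0 < z R ∧ z R < c R} => w R) ⬝ᵥ d := by
    intro w
    have h_free : ∀ R : {R // 0 < z R ∧ z R < c R}, w R * D R = w R * d R := fun R => by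
      simp [D, R.2]
    have h_bound : ∀ R : {R // ¬(0 < z R ∧ z R < c R)}, w R * D R = 0 := fun R => by
      simp [hD_free R R.2]
    rw [dotProduct, ← Fintype.sum_subtype_add_sum_subtype (fun R => 0 < z R ∧ z R < c R)]
    simp only [h_free, h_bound, Finset.sum_const_zero, add_zero, dotProduct]
  obtain ⟨ε, ⟨h0, hc, hu⟩, hε⟩ :=
    ((eventually_feasible_add_smul A hz0 hzc hzu hD_free fun i hi => (hD_dot (A i)).trans
      (hd_tight ⟨i, hi⟩)).filter_mono nhdsWithin_le_nhds |>.and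
      (self_mem_nhdsWithin (s := Ioi 0))).exists
  have hsum : ∑ R, (z + ε • D) R = ∑ R, z R + ε * ((fun _ => 1) ⬝ᵥ D) := by
    simp [Finset.sum_add_distrib, Finset.mul_sum, dotProduct]
  have hle := hmin _ h0 hc hu
  rw [hsum, hD_dot] at hle
  linarith [mul_neg_of_pos_of_neg (show (0 : ℝ) < ε from hε) hd_one]

end LinearProgram

theorem Matrix.intCast_det_mul_mem_bot_of_mulVec_eq {κ K : Type*} [Fintype κ] [DecidableEq κ]
    [Field K] [CharZero K] {B : Matrix κ κ ℤ} (hB : B.det ≠ 0) (b : κ → ℤ) {x : κ → K}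
    (hx : B.map (↑) *ᵥ x = fun a => (b a : K)) (a : κ) :
    (B.det : K) * x a ∈ (⊥ : Subring K) := by
  have hinj : Function.Injective (B.map ((↑) : ℤ → K)).mulVec := by
    rw [mulVec_injective_iff_isUnit, isUnit_iff_isUnit_det, ← Int.cast_det, isUnit_iff_ne_zero]
    exact_mod_cast hB
  have hcramer : (B.det : K) • x = fun a => ((B.cramer b a : ℤ) : K) := hinj <| by
    ext i
    have := RingHom.map_mulVec (Int.castRingHom K) B (B.cramer b) i
    rw [mulVec_cramer] at this
    simpa [mulVec_smul, hx, Function.comp_def] using this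
  rw [← smul_eq_mul, ← Pi.smul_apply, hcramer]
  exact intCast_mem _ _

theorem exists_fin_linearIndependent_of_mem_span {ι W K : Type*} [Finite ι] [Field K]
    [AddCommGroup W] [Module K W] {r : ι → W} {x : W} (hx : x ∈ span K (range r)) :
    ∃ (m : ℕ) (a : Fin m → ι), Function.Injective a ∧ LinearIndependent K (r ∘ a) ∧
      x ∈ span K (range (r ∘ a)) := by
  obtain ⟨κ, a, ha, hspan, hli⟩ := exists_linearIndependent' K r
  have : Finite κ := Finite.of_injective a ha
  set e := (Finite.equivFin κ).symm
  refine ⟨_, a ∘ e, ha.comp e.injective, hli.comp e e.injective, ?_⟩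
  rwa [← Function.comp_assoc, EquivLike.range_comp, hspan]

theorem exists_det_ne_zero_of_linearIndependent {κ V K : Type*} [Fintype κ] [DecidableEq κ]
    [Fintype V] [Field K] {v : κ → V → K} (hv : LinearIndependent K v) :
    ∃ g : κ → V, (of fun a b => v a (g b)).det ≠ 0 := by
  have hcols : span K (range (of v).col) = ⊤ := by
    apply eq_top_of_finrank_eq
    rw [← rank_eq_finrank_span_cols, LinearIndependent.rank_matrix (M := of v) hv,
      Module.finrank_fintype_fun_eq_card]
  obtain ⟨κ', a, ha, hspan, hli⟩ := exists_linearIndependent' K (of v).col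
  have : Fintype κ' := Fintype.ofInjective a ha
  have hcard : Fintype.card κ = Fintype.card κ' := by
    rw [linearIndependent_iff_card_eq_finrank_span.1 hli, Set.finrank, hspan, hcols, finrank_top,
      Module.finrank_fintype_fun_eq_card]
  set e := Fintype.equivOfCardEq hcard
  refine ⟨a ∘ e, fun h => ?_⟩
  have hunit : IsUnit (of fun a' b => v a' ((a ∘ e) b)) :=
    linearIndependent_cols_iff_isUnit.1 (hli.comp e e.injective)
  exact (isUnit_iff_isUnit_det _).1 hunit |>.ne_zero h

theorem exists_det_submatrix_mul_sum_mem_bot {ι V : Type*} [Fintype ι] [Fintype V]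
    (A : Matrix ι V ℤ) (z : V → ℝ) (p : V → Prop) (hz : ∀ R, ¬p R → z R ∈ (⊥ : Subring ℝ))
    (q : ι → Prop) (hq : ∀ i, q i → (A.map (↑) *ᵥ z) i ∈ (⊥ : Subring ℝ))
    (hspan : (fun _ : Subtype p => (1 : ℝ)) ∈
      span ℝ (range fun i : Subtype q => fun R : Subtype p => (A i R : ℝ))) :
    ∃ (m : ℕ) (a : Fin m → ι) (g : Fin m → V), Function.Injective a ∧
      (A.submatrix a g).det ≠ 0 ∧ ((A.submatrix a g).det : ℝ) * ∑ R, z R ∈ (⊥ : Subring ℝ) := by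
  classical
  obtain ⟨m, a, ha, hli, hone⟩ := exists_fin_linearIndependent_of_mem_span hspan
  obtain ⟨g, hg⟩ := exists_det_ne_zero_of_linearIndependent hli
  set B := A.submatrix (fun x => (a x : ι)) (fun y => (g y : V))
  have hdet : B.det ≠ 0 := by
    have : (B.det : ℝ) ≠ 0 := by rw [Int.cast_det]; exact hg
    exact_mod_cast this
  obtain ⟨w, hw⟩ := (mem_span_range_iff_exists_fun ℝ).1 hone
  have hw_R : ∀ R : Subtype p, ∑ x, w x * A (a x) R = 1 := fun R => by
    simpa using congr_fun hw R
  have hBw : Bᵀ.map (↑) *ᵥ w = fun _ => ((1 : ℤ) : ℝ) := by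
    ext y
    simpa [B, mulVec, dotProduct, mul_comm] using hw_R (g y)
  have hsplit : ∀ f : V → ℝ, ∑ R, f R = ∑ R : Subtype p, f R + ∑ R : {R // ¬p R}, f R :=
    fun f => (Fintype.sum_subtype_add_sum_subtype p f).symm
  have hsum : ∑ R, z R =
      ∑ x, w x * ((A.map (↑) *ᵥ z) (a x) - ∑ R : {R // ¬p R}, A (a x) R * z R) +
        ∑ R : {R // ¬p R}, z R := by
    simp only [mulVec, dotProduct, map_apply]
    simp_rw [hsplit, add_sub_cancel_right, Finset.mul_sum, ← mul_assoc]
    rw [Finset.sum_comm]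
    simp_rw [← Finset.sum_mul, hw_R, one_mul]
  refine ⟨m, _, _, Subtype.val_injective.comp ha, hdet, ?_⟩
  rw [hsum, mul_add, Finset.mul_sum]
  refine add_mem (sum_mem fun x _ => ?_)
    (mul_mem (intCast_mem _ _) (sum_mem fun R _ => hz R R.2))
  rw [← mul_assoc]
  refine mul_mem ?_ (sub_mem (hq _ (a x).2)
    (sum_mem fun R _ => mul_mem (intCast_mem _ _) (hz R R.2)))
  rw [← det_transpose]
  exact intCast_det_mul_mem_bot_of_mulVec_eq (by rwa [det_transpose]) _ hBw x

theorem Matrix.natAbs_det_le_factorial {m : ℕ} {B : Matrix (Fin m) (Fin m) ℤ}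
    (hB : ∀ i j, B i j = 0 ∨ B i j = 1) : B.det.natAbs ≤ m.factorial := by
  have h := det_le (A := B) (abv := AbsoluteValue.abs) (x := (1 : ℤ)) fun i j => by
    rcases hB i j with h | h <;> simp [h]
  simp only [Fintype.card_fin, one_pow, nsmul_eq_mul, mul_one, AbsoluteValue.abs_apply] at h
  exact_mod_cast (Int.abs_eq_natAbs _ ▸ h)

theorem IsLcmOf.ne_zero {s : Set ℕ} {L N : ℕ} (hL : IsLcmOf s L) (hs : ∀ d ∈ s, 0 < d ∧ d ≤ N) :
    L ≠ 0 := by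
  have : L ∣ N.factorial := hL.2 _ fun d hd => Nat.dvd_factorial (hs d hd).1 (hs d hd).2
  exact ne_zero_of_dvd_ne_zero (Nat.factorial_ne_zero N) this

theorem IsLcmOf.detVals_ne_zero {n L : ℕ} (hL : IsLcmOf (DetVals n) L) : L ≠ 0 :=
  hL.ne_zero (N := n.factorial) fun _ ⟨_, hm, _, hB, hdet, hd⟩ =>
    hd ▸ ⟨Int.natAbs_pos.2 hdet, (natAbs_det_le_factorial hB).trans (Nat.factorial_le hm)⟩

def voterMatrix (n : ℕ) : Matrix (Fin n) (Typ n) ℤ :=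
  of fun i R => if i ∈ R.1 then 1 else 0

theorem fracUtil_eq_mulVec {n : ℕ} (x : Typ n → ℝ) (i : Fin n) :
    fracUtil x i = ((voterMatrix n).map (↑) *ᵥ x) i := by
  simp [fracUtil, voterMatrix, mulVec, dotProduct]

theorem exists_mem_detVals_mul_sum_mem_bot {n : ℕ} {c : Typ n → ℕ} {u : Fin n → ℤ}
    {z : Typ n → ℝ} (hz0 : ∀ R, 0 ≤ z R) (hzc : ∀ R, z R ≤ c R)
    (hzu : ∀ i, (u i : ℝ) ≤ fracUtil z i)
    (hmin : ∀ z' : Typ n → ℝ, (∀ R, 0 ≤ z' R) → (∀ R, z' R ≤ c R) →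
      (∀ i, (u i : ℝ) ≤ fracUtil z' i) → ∑ R, z R ≤ ∑ R, z' R) :
    ∃ D ∈ DetVals n, (D : ℝ) * ∑ R, z R ∈ (⊥ : Subring ℝ) := by
  simp only [fracUtil_eq_mulVec] at hzu hmin
  have hz_bound : ∀ R, ¬(0 < z R ∧ z R < c R) → z R ∈ (⊥ : Subring ℝ) := fun R hR => by
    rcases (hz0 R).eq_or_lt with h | h
    · exact h ▸ zero_mem _
    · exact (hzc R).antisymm (not_lt.1 fun h' => hR ⟨h, h'⟩) ▸ natCast_mem _ _
  obtain ⟨m, a, g, ha, hdet, hmem⟩ := exists_det_submatrix_mul_sum_mem_bot (voterMatrix n) z _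
    hz_bound _ (fun i hi => hi ▸ intCast_mem _ _)
    (one_mem_span_tight_rows_of_optimal ((voterMatrix n).map (↑)) hz0 hzc hzu hmin)
  refine ⟨_, ⟨m, by simpa using Fintype.card_le_of_injective a ha, _, fun i j => ?_, hdet, rfl⟩, ?_⟩
  · by_cases h : a i ∈ (g j).1 <;> simp [voterMatrix, h]
  · rw [Nat.cast_natAbs, Int.cast_abs]
    rcases abs_choice (((voterMatrix n).submatrix a g).det : ℝ) with h | h <;> rw [h]
    · exact hmem
    · rw [neg_mul]
      exact neg_mem hmem

theorem div_le_of_le_add_of_lt_one_div {L : ℕ} (hL : 0 < (L : ℝ)) {m k : ℤ} {δ : ℝ}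
    (hδ : δ < 1 / L) (h : (m : ℝ) / L ≤ k + δ) : (m : ℝ) / L ≤ k := by
  rw [div_le_iff₀ hL] at h ⊢
  have hδL : δ * L < 1 := (lt_div_iff₀ hL).1 hδ
  have : m < k * (L : ℤ) + 1 := by exact_mod_cast (by nlinarith : (m : ℝ) < k * L + 1)
  exact_mod_cast (Int.lt_add_one_iff.1 this)

theorem stmt17 (n : ℕ) (c : Typ n → ℕ) (u : Fin n → ℤ) (L : ℕ)
    (hL : IsLcmOf (DetVals n) L) (τ : ℝ)
    (hτ : IsLeast {s : ℝ | ∃ z : Typ n → ℝ,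
        (∀ R, 0 ≤ z R) ∧ (∀ R, z R ≤ (c R : ℝ)) ∧
        (∀ i, (u i : ℝ) ≤ fracUtil z i) ∧ s = ∑ R : Typ n, z R} τ) :
    (∃ m : ℤ, τ = (m : ℝ) / (L : ℝ)) ∧
    (∀ (k' : ℤ) (δ : ℝ), 0 < δ → δ < 1 / (L : ℝ) → τ ≤ (k' : ℝ) + δ → τ ≤ (k' : ℝ)) := by
  obtain ⟨⟨z, hz0, hzc, hzu, rfl⟩, hmin⟩ := hτ
  obtain ⟨D, hD, hDτ⟩ := exists_mem_detVals_mul_sum_mem_bot hz0 hzc hzu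
    fun z' h0 hc hu => hmin ⟨z', h0, hc, hu, rfl⟩
  obtain ⟨e, he⟩ := hL.1 D hD
  have hL0 : 0 < (L : ℝ) := Nat.cast_pos.2 (Nat.pos_of_ne_zero hL.detVals_ne_zero)
  obtain ⟨m, hm⟩ : ∃ m : ℤ, (m : ℝ) = L * ∑ R, z R := by
    refine Subring.mem_bot.1 ?_
    rw [he, Nat.cast_mul, mul_comm (D : ℝ), mul_assoc]
    exact mul_mem (natCast_mem _ _) hDτ
  have hτ : ∑ R, z R = m / L := by rw [hm, mul_div_cancel_left₀ _ hL0.ne']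
  exact ⟨⟨m, hτ⟩, fun k δ _ hδ h => hτ ▸ div_le_of_le_add_of_lt_one_div hL0 hδ (hτ ▸ h)⟩
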